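/- arXiv:2504.16437 — 5 statements merged into one kernel-verified Lean document; each statement's English description precedes it below -/
import Mathlib

section
/- There exist functions V_A, V_B : {0,1}^d → S_{3d} such that for all vectors a, b ∈ {0,1}^d, the length of a longest common subsequence of V_A(a) and V_B(b) equals 2d − ⟨a, b⟩, where ⟨a, b⟩ = Σ_{i∈[d]} a[i]b[i]. Concretely, V_A(a) is the concatenation over i ∈ [d] of the coordinate gadget C_A(a[i]) shifted by 3(i−1), and similarly for V_B(b) with C_B. -/
/-- Length of a longest common subsequence of two strings (lists over ℕ). -/
noncomputable def LCS (x y : List ℕ) : ℕ :=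
  sSup {k | ∃ s : List ℕ, s.Sublist x ∧ s.Sublist y ∧ s.length = k}

/-- Ulam distance between permutations, via `d_U(σ,τ) = |σ| − LCS(σ,τ)`. -/
noncomputable def ulamDist (x y : List ℕ) : ℕ := x.length - LCS x y

/-- `π` is a permutation of `[n] = {1,…,n}` viewed as a string. -/
def IsPermOf (n : ℕ) (π : List ℕ) : Prop := π.Perm (List.range' 1 n)

/-- The coordinate gadget `C_A`. -/
def CA (x : Fin 2) : List ℕ := if x = 0 then [1, 2, 3] else [3, 1, 2]

/-- The coordinate gadget `C_B`. -/
def CB (y : Fin 2) : List ℕ := if y = 0 then [1, 3, 2] else [2, 1, 3]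

/-- `Δ_k(s)`: add `k` to every symbol of `s`. -/
def shift (k : ℕ) (s : List ℕ) : List ℕ := s.map (· + k)

/-- The vector gadget `V_A`: concatenation of shifted coordinate gadgets. -/
def VA (d : ℕ) (a : Fin d → Fin 2) : List ℕ :=
  ((List.finRange d).map fun i => shift (3 * i.val) (CA (a i))).flatten

/-- The vector gadget `V_B`: concatenation of shifted coordinate gadgets. -/
def VB (d : ℕ) (b : Fin d → Fin 2) : List ℕ :=
  ((List.finRange d).map fun i => shift (3 * i.val) (CB (b i))).flatten

/-!
The symbols of coordinate `i` of both gadgets are `3i+1, 3i+2, 3i+3`, so the alphabets of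
consecutive blocks are disjoint and increasing. Filtering a common subsequence by the alphabet
of each block shows that symbols are only matched inside a block, hence the LCS is the sum of
the blockwise LCS values. Shifting does not change an LCS, and the four cases
`LCS (C_A x) (C_B y) = 2 - x y` are checked directly.
-/

@[simp]
lemma shift_zero (s : List ℕ) : shift 0 s = s := by simp [shift]

lemma shift_shift (j k : ℕ) (s : List ℕ) : shift j (shift k s) = shift (k + j) s := by
  simp [shift, Function.comp_def, Nat.add_assoc]

lemma shift_flatten (k : ℕ) (L : List (List ℕ)) :
    shift k L.flatten = (L.map (shift k)).flatten :=
  List.map_flatten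

lemma mem_shift {k v : ℕ} {s : List ℕ} : v ∈ shift k s ↔ ∃ u ∈ s, u + k = v :=
  List.mem_map

lemma shift_range' (k s n : ℕ) : shift k (List.range' s n) = List.range' (s + k) n := by
  simpa [shift, Nat.add_comm] using List.map_add_range' (a := k) s n 1

lemma nonempty_commonSublistLengths (x y : List ℕ) :
    {k | ∃ s : List ℕ, s.Sublist x ∧ s.Sublist y ∧ s.length = k}.Nonempty :=
  ⟨0, [], List.nil_sublist _, List.nil_sublist _, rfl⟩

lemma bddAbove_commonSublistLengths (x y : List ℕ) :
    BddAbove {k | ∃ s : List ℕ, s.Sublist x ∧ s.Sublist y ∧ s.length = k} :=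
  ⟨x.length, by rintro k ⟨s, hx, -, rfl⟩; exact hx.length_le⟩

lemma length_le_LCS {x y s : List ℕ} (hx : s.Sublist x) (hy : s.Sublist y) :
    s.length ≤ LCS x y :=
  le_csSup (bddAbove_commonSublistLengths x y) ⟨s, hx, hy, rfl⟩

lemma LCS_le {x y : List ℕ} {n : ℕ}
    (h : ∀ s : List ℕ, s.Sublist x → s.Sublist y → s.length ≤ n) : LCS x y ≤ n :=
  csSup_le (nonempty_commonSublistLengths x y)
    (by rintro k ⟨s, hx, hy, rfl⟩; exact h s hx hy)

lemma exists_sublist_length_eq_LCS (x y : List ℕ) :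
    ∃ s : List ℕ, s.Sublist x ∧ s.Sublist y ∧ s.length = LCS x y :=
  Nat.sSup_mem (nonempty_commonSublistLengths x y) (bddAbove_commonSublistLengths x y)

/-- Quantifying over `x.sublists` makes the upper bound decidable. -/
lemma LCS_eq_length {x y w : List ℕ} (hx : w.Sublist x) (hy : w.Sublist y)
    (h : ∀ s ∈ x.sublists, s.Sublist y → s.length ≤ w.length) : LCS x y = w.length :=
  le_antisymm (LCS_le fun s hsx hsy => h s (List.mem_sublists.mpr hsx) hsy)
    (length_le_LCS hx hy)

lemma LCS_nil_left (y : List ℕ) : LCS [] y = 0 :=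
  Nat.eq_zero_of_le_zero <| LCS_le fun s hs _ => by simp [List.sublist_nil.mp hs]

lemma LCS_map_of_injective {f : ℕ → ℕ} (hf : Function.Injective f) (x y : List ℕ) :
    LCS (x.map f) (y.map f) = LCS x y := by
  apply le_antisymm
  · refine LCS_le fun s hx hy => ?_
    obtain ⟨t, htx, rfl⟩ := List.sublist_map_iff.mp hx
    obtain ⟨u, huy, hut⟩ := List.sublist_map_iff.mp hy
    rw [← List.map_injective_iff.mpr hf hut] at huy
    simpa using length_le_LCS htx huy
  · obtain ⟨s, hx, hy, hs⟩ := exists_sublist_length_eq_LCS x y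
    simpa [hs] using length_le_LCS (hx.map f) (hy.map f)

lemma LCS_shift (k : ℕ) (x y : List ℕ) : LCS (shift k x) (shift k y) = LCS x y :=
  LCS_map_of_injective (add_left_injective k) x y

lemma List.Sublist.filter_sublist_of_append {α : Type*} {p : α → Bool} {s z₁ z₂ : List α}
    (hs : s.Sublist (z₁ ++ z₂)) (h₁ : ∀ v ∈ z₁, p v) (h₂ : ∀ v ∈ z₂, ¬ p v) :
    (s.filter p).Sublist z₁ ∧ (s.filter (!p ·)).Sublist z₂ := by
  have low := hs.filter p
  have high := hs.filter (!p ·)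
  rw [List.filter_append, (List.filter_eq_self (l := z₁)).mpr h₁,
    (List.filter_eq_nil_iff (l := z₂)).mpr h₂, List.append_nil] at low
  rw [List.filter_append, (List.filter_eq_nil_iff (l := z₁)).mpr (by simpa using h₁),
    (List.filter_eq_self (l := z₂)).mpr (by simpa using h₂), List.nil_append] at high
  exact ⟨low, high⟩

lemma LCS_append_of_lt {c : ℕ} {x₁ x₂ y₁ y₂ : List ℕ}
    (hx₁ : ∀ v ∈ x₁, v < c) (hy₁ : ∀ v ∈ y₁, v < c)
    (hx₂ : ∀ v ∈ x₂, c ≤ v) (hy₂ : ∀ v ∈ y₂, c ≤ v) :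
    LCS (x₁ ++ x₂) (y₁ ++ y₂) = LCS x₁ y₁ + LCS x₂ y₂ := by
  apply le_antisymm
  · refine LCS_le fun s hx hy => ?_
    obtain ⟨hx₁', hx₂'⟩ := hx.filter_sublist_of_append (p := (· < c))
      (by simpa using hx₁) (by simpa using hx₂)
    obtain ⟨hy₁', hy₂'⟩ := hy.filter_sublist_of_append (p := (· < c))
      (by simpa using hy₁) (by simpa using hy₂)
    rw [List.length_eq_length_filter_add (· < c)]
    exact Nat.add_le_add (length_le_LCS hx₁' hy₁') (length_le_LCS hx₂' hy₂')
  · obtain ⟨s₁, h₁x, h₁y, h₁⟩ := exists_sublist_length_eq_LCS x₁ y₁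
    obtain ⟨s₂, h₂x, h₂y, h₂⟩ := exists_sublist_length_eq_LCS x₂ y₂
    simpa [h₁, h₂] using length_le_LCS (h₁x.append h₂x) (h₁y.append h₂y)

section BlockConcat

def blockConcat (m : ℕ) {d : ℕ} (f : Fin d → List ℕ) : List ℕ :=
  ((List.finRange d).map fun i => shift (m * i.val) (f i)).flatten

variable {m : ℕ}

@[simp]
lemma blockConcat_zero (f : Fin 0 → List ℕ) : blockConcat m f = [] := rfl

lemma blockConcat_succ {d : ℕ} (f : Fin (d + 1) → List ℕ) :
    blockConcat m f = f 0 ++ shift m (blockConcat m fun i => f i.succ) := by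
  simp only [blockConcat, List.finRange_succ, List.map_cons, List.map_map, List.flatten_cons,
    Function.comp_def, Fin.val_zero, Fin.val_succ, Nat.mul_zero, Nat.mul_succ, shift_zero,
    shift_flatten, shift_shift]

lemma one_le_of_mem_blockConcat {d : ℕ} {f : Fin d → List ℕ} (hf : ∀ i, ∀ v ∈ f i, 1 ≤ v)
    {v : ℕ} (hv : v ∈ blockConcat m f) : 1 ≤ v := by
  simp only [blockConcat, List.mem_flatten, List.mem_map] at hv
  obtain ⟨_, ⟨i, -, rfl⟩, hv⟩ := hv
  obtain ⟨u, hu, rfl⟩ := mem_shift.mp hv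
  exact (hf i u hu).trans (Nat.le_add_right _ _)

lemma blockConcat_perm {d : ℕ} {f : Fin d → List ℕ} (hf : ∀ i, (f i).Perm (List.range' 1 m)) :
    (blockConcat m f).Perm (List.range' 1 (m * d)) := by
  induction d with
  | zero => simp
  | succ d ih =>
    have htail := (ih fun i => hf i.succ).map (· + m)
    rw [blockConcat_succ, Nat.mul_succ, Nat.add_comm (m * d), ← List.range'_append, Nat.one_mul,
      ← shift_range']
    exact (hf 0).append htail

lemma LCS_blockConcat {d : ℕ} {f g : Fin d → List ℕ}
    (hf : ∀ i, ∀ v ∈ f i, 1 ≤ v ∧ v ≤ m) (hg : ∀ i, ∀ v ∈ g i, 1 ≤ v ∧ v ≤ m) :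
    LCS (blockConcat m f) (blockConcat m g) = ∑ i, LCS (f i) (g i) := by
  induction d with
  | zero => simp [LCS_nil_left]
  | succ d ih =>
    have tail_gt {h : Fin (d + 1) → List ℕ} (hh : ∀ i, ∀ v ∈ h i, 1 ≤ v ∧ v ≤ m) :
        ∀ v ∈ shift m (blockConcat m fun i => h i.succ), m + 1 ≤ v := by
      intro v hv
      obtain ⟨u, hu, rfl⟩ := mem_shift.mp hv
      have := one_le_of_mem_blockConcat (fun i v hv => (hh i.succ v hv).1) hu
      omega
    rw [blockConcat_succ, blockConcat_succ,
      LCS_append_of_lt (c := m + 1) (fun v hv => Nat.lt_succ_of_le (hf 0 v hv).2)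
        (fun v hv => Nat.lt_succ_of_le (hg 0 v hv).2) (tail_gt hf) (tail_gt hg),
      LCS_shift, ih (fun i => hf i.succ) (fun i => hg i.succ), Fin.sum_univ_succ]

end BlockConcat

lemma mem_range'_one_iff {v m : ℕ} : v ∈ List.range' 1 m ↔ 1 ≤ v ∧ v ≤ m := by
  rw [List.mem_range'_1]; omega

lemma CA_perm (x : Fin 2) : (CA x).Perm (List.range' 1 3) := by
  fin_cases x <;> decide

lemma CB_perm (y : Fin 2) : (CB y).Perm (List.range' 1 3) := by
  fin_cases y <;> decide

lemma LCS_CA_CB (x y : Fin 2) : LCS (CA x) (CB y) = 2 - (x : ℕ) * (y : ℕ) := by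
  fin_cases x <;> fin_cases y
  · exact LCS_eq_length (w := [1, 3]) (by decide) (by decide) (by decide)
  · exact LCS_eq_length (w := [1, 3]) (by decide) (by decide) (by decide)
  · exact LCS_eq_length (w := [1, 2]) (by decide) (by decide) (by decide)
  · exact LCS_eq_length (w := [1]) (by decide) (by decide) (by decide)

theorem vector_gadgets (d : ℕ) (a b : Fin d → Fin 2) :
    IsPermOf (3 * d) (VA d a) ∧ IsPermOf (3 * d) (VB d b) ∧
      LCS (VA d a) (VB d b) = 2 * d - ∑ i, (a i : ℕ) * (b i : ℕ) := by
  have hA : VA d a = blockConcat 3 fun i => CA (a i) := rfl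
  have hB : VB d b = blockConcat 3 fun i => CB (b i) := rfl
  have hprod_le (i : Fin d) : (a i : ℕ) * (b i : ℕ) ≤ 2 := by
    have := (a i).is_le; have := (b i).is_le; nlinarith
  refine ⟨hA ▸ blockConcat_perm fun i => CA_perm _, hB ▸ blockConcat_perm fun i => CB_perm _, ?_⟩
  rw [hA, hB, LCS_blockConcat (fun i v hv => mem_range'_one_iff.mp ((CA_perm _).subset hv))
    (fun i v hv => mem_range'_one_iff.mp ((CB_perm _).subset hv))]
  simp only [LCS_CA_CB]
  rw [Finset.sum_tsub_distrib _ fun i _ => hprod_le i]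
  simp [Nat.mul_comm]
end

section
/- With the notation of the Max-Cut reduction (N = 3n+2, X₁ = (n+1)⋯(2n+1), X₂ = (2n+2)⋯(3n+2), π^L = 1⋯n ∘ X₁ ∘ X₂, π^R = X₁ ∘ n⋯1 ∘ X₂), every permutation π ∈ S_N that is not of the form π^{A,B} for some partition A ⊔ B = [n] satisfies d_U(π, π^L) + d_U(π, π^R) ≥ n + 1. -/
/-! If the two distances sum to at most `n`, take common subsequences `s` of `π, π^L` and `t` of
`π, π^R` of maximal length. Together they have at least `5n + 4` of the `3n + 2` letters of `π`, so
they share at least `2n + 2` letters, which form a common subsequence of `s` and `t`: an increasing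
subsequence of `π^R`. The only one that long is `X₁ ∘ X₂`, so `s` and `t` share no letter of `[n]`,
and counting the rest forces `s = A ∘ X₁ ∘ X₂` and `t = X₁ ∘ B ∘ X₂` with `A ⊔ B = [n]`. In `π`, the
letters of `A` precede `n + 1` (by `s`) and all other letters follow it (by `t`), hence
`π = π^{A,B}`. -/

open List

theorem exists_sublist_sublist_length_eq_LCS (x y : List ℕ) :
    ∃ s : List ℕ, s <+ x ∧ s <+ y ∧ s.length = LCS x y :=
  Nat.sSup_mem (s := {k | ∃ s : List ℕ, s <+ x ∧ s <+ y ∧ s.length = k})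
    ⟨0, [], nil_sublist x, nil_sublist y, rfl⟩
    ⟨x.length, by rintro k ⟨s, hs, -, rfl⟩; exact hs.length_le⟩

theorem exists_sublists_of_ulamDist_add_le {x y z : List ℕ} {k : ℕ}
    (h : ulamDist x y + ulamDist x z ≤ k) :
    ∃ s t : List ℕ, s <+ x ∧ s <+ y ∧ t <+ x ∧ t <+ z ∧
      2 * x.length ≤ s.length + t.length + k := by
  obtain ⟨s, hsx, hsy, hs⟩ := exists_sublist_sublist_length_eq_LCS x y
  obtain ⟨t, htx, htz, ht⟩ := exists_sublist_sublist_length_eq_LCS x z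
  refine ⟨s, t, hsx, hsy, htx, htz, ?_⟩
  unfold ulamDist at h
  have := hsx.length_le
  have := htx.length_le
  omega

namespace List

variable {α : Type*}

theorem Nodup.exists_common_sublist [DecidableEq α] {l s t : List α} (hl : l.Nodup)
    (hs : s <+ l) (ht : t <+ l) :
    ∃ u, u <+ s ∧ u <+ t ∧ (∀ x ∈ s, x ∈ t → x ∈ u) ∧
      s.length + t.length ≤ u.length + l.length := by
  refine ⟨s.filter (· ∈ t), filter_sublist, ?_, fun x hxs hxt => mem_filter.2 ⟨hxs, by simpa⟩, ?_⟩
  · have : s.filter (· ∈ t) = t.filter (· ∈ s) := by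
      rw [← hl.perm_iff_eq_of_sublist (filter_sublist.trans hs) (filter_sublist.trans ht),
        perm_ext_iff_of_nodup ((hs.nodup hl).filter _) ((ht.nodup hl).filter _)]
      simp [and_comm]
    rw [this]
    exact filter_sublist
  · have hnd : (s.filter (· ∉ t) ++ t).Nodup :=
      nodup_append.2 ⟨(hs.nodup hl).filter _, ht.nodup hl, fun x hx y hy => by
        rintro rfl; simp_all⟩
    have hsub : s.filter (· ∉ t) ++ t ⊆ l := by
      intro x hx
      rcases mem_append.1 hx with hx | hx
      · exact hs.subset (mem_of_mem_filter hx)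
      · exact ht.subset hx
    have := (subperm_of_subset hnd hsub).length_le
    have := length_eq_length_filter_add (l := s) (· ∈ t)
    simp only [length_append, decide_not] at *
    omega

theorem length_le_one_of_pairwise_lt_of_pairwise_gt [Preorder α] :
    ∀ {l : List α}, l.Pairwise (· < ·) → l.Pairwise (· > ·) → l.length ≤ 1
  | [], _, _ | [_], _, _ => by simp
  | a :: b :: _, h₁, h₂ =>
    absurd ((pairwise_cons.1 h₁).1 b (by simp)) (lt_asymm ((pairwise_cons.1 h₂).1 b (by simp)))

theorem eq_append_cons_of_sublist {x : α} {a b c l : List α} (hl : l.Nodup)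
    (h₁ : a ++ x :: b <+ l) (h₂ : x :: c <+ l) (hsub : l ⊆ a ++ x :: c) : l = a ++ x :: c := by
  induction l generalizing a with
  | nil => exact absurd h₂ (by simp)
  | cons y l ih =>
    obtain ⟨hy, hl'⟩ := nodup_cons.1 hl
    cases a with
    | nil =>
      exact (h₂.eq_of_length
        (h₂.length_le.antisymm (subperm_of_subset hl hsub).length_le)).symm
    | cons z a =>
      obtain rfl | hzy := eq_or_ne z y
      · have h₁ := cons_sublist_cons.1 h₁
        have hxz : x ≠ z := fun h => hy (h ▸ h₁.subset (by simp))
        have h₂ : x :: c <+ l := (sublist_cons_iff.1 h₂).resolve_right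
          (by rintro ⟨r, hr, -⟩; exact hxz (cons.inj hr).1)
        rw [cons_append, ih hl' h₁ h₂ fun w hw => ?_]
        have := hsub (mem_cons_of_mem z hw)
        rw [cons_append, mem_cons] at this
        exact this.resolve_left (by rintro rfl; exact hy hw)
      · have h₁ : z :: a ++ x :: b <+ l := (sublist_cons_iff.1 h₁).resolve_right
          (by rintro ⟨r, hr, -⟩; exact hzy (cons.inj hr).1)
        have hyl : y ∈ z :: a ++ x :: c := hsub mem_cons_self
        simp only [cons_append, mem_cons, mem_append] at hyl
        rcases hyl with rfl | hya | rfl | hyc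
        · exact absurd rfl hzy
        · exact absurd (h₁.subset (by simp [hya])) hy
        · exact absurd (h₁.subset (by simp)) hy
        · exact absurd (h₂.tail.subset hyc) hy

theorem exists_perm_of_sublist_append {S A C s t : List α} (hS : S.Nodup)
    (hs : s <+ S ++ A ++ C) (ht : t <+ A ++ S.reverse ++ C) (hshared : ∀ x ∈ s, x ∈ t → x ∉ S)
    (hlen : S.length + 2 * (A.length + C.length) ≤ s.length + t.length) :
    ∃ a b, a <+ S ∧ b <+ S.reverse ∧ (a ++ b) ~ S ∧ s = a ++ A ++ C ∧ t = A ++ b ++ C := by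
  obtain ⟨s12, s3, rfl, hs12, hs3⟩ := sublist_append_iff.1 hs
  obtain ⟨a, s1, rfl, ha, hs1⟩ := sublist_append_iff.1 hs12
  obtain ⟨t12, t3, rfl, ht12, ht3⟩ := sublist_append_iff.1 ht
  obtain ⟨t1, b, rfl, ht1, hb⟩ := sublist_append_iff.1 ht12
  have hab : (a ++ b).Nodup := nodup_append.2 ⟨ha.nodup hS, hb.nodup (nodup_reverse.2 hS),
    fun x hx y hy hxy => hshared x (by simp [hx]) (by simp [hxy ▸ hy]) (ha.subset hx)⟩
  have hab_sub : a ++ b <+~ S := subperm_of_subset hab fun x hx => by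
    rcases mem_append.1 hx with hx | hx
    · exact ha.subset hx
    · exact mem_reverse.1 (hb.subset hx)
  have := hab_sub.length_le
  have := hs1.length_le; have := hs3.length_le; have := ht1.length_le; have := ht3.length_le
  simp only [length_append] at *
  refine ⟨a, b, ha, hb, hab_sub.perm_of_length_le (by simp only [length_append]; omega), ?_, ?_⟩
  · rw [hs1.eq_of_length (by omega), hs3.eq_of_length (by omega)]
  · rw [ht1.eq_of_length (by omega), ht3.eq_of_length (by omega)]

theorem Perm.subset_append_of_perm {l S A C a b : List α} (hl : l ~ S ++ A ++ C)
    (hab : a ++ b ~ S) : l ⊆ a ++ A ++ b ++ C := fun y hy => by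
  have hyS := hab.mem_iff (a := y)
  have hyl := hl.subset hy
  simp only [mem_append] at hyS hyl ⊢
  tauto

end List

theorem range'_append_range'_append_range' (n : ℕ) :
    range' 1 n ++ range' (n + 1) (n + 1) ++ range' (2 * n + 2) (n + 1) = range' 1 (3 * n + 2) := by
  rw [show n + 1 = 1 + n by omega, range'_append_1,
    show 2 * n + 2 = 1 + (n + (1 + n)) by omega, range'_append_1]
  congr 1
  omega

theorem eq_range'_append_of_sublist {n : ℕ} {u C : List ℕ} (hu : u.Pairwise (· < ·))
    (hR : u <+ range' (n + 1) (n + 1) ++ (range' 1 n).reverse ++ C)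
    (hlen : n + 1 + C.length ≤ u.length) : u = range' (n + 1) (n + 1) ++ C := by
  obtain ⟨u12, u3, rfl, hu12, hu3⟩ := sublist_append_iff.1 hR
  obtain ⟨u1, u2, rfl, hu1, hu2⟩ := sublist_append_iff.1 hu12
  simp only [pairwise_append, mem_append] at hu
  have hu3_len := hu3.length_le
  have hu2_nil : u2 = [] := by
    refine eq_nil_iff_forall_not_mem.2 fun b hb => ?_
    have hb_small := mem_range'_1.1 (mem_reverse.1 (hu2.subset hb))
    have hu1_nil : u1 = [] := eq_nil_iff_forall_not_mem.2 fun a ha => by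
      have := mem_range'_1.1 (hu1.subset ha)
      have := hu.1.2.2 a ha b hb
      omega
    have := length_le_one_of_pairwise_lt_of_pairwise_gt hu.1.2.1
      ((pairwise_reverse.2 pairwise_lt_range').sublist hu2)
    simp only [hu1_nil, length_append, length_nil] at hlen
    omega
  subst hu2_nil
  have hu1_len := hu1.length_le
  simp only [length_range', append_nil, length_append] at hlen hu1_len
  rw [append_nil, hu1.eq_of_length (by rw [length_range']; omega), hu3.eq_of_length (by omega)]

theorem illegal_permutation_cost (n : ℕ)
    (X1 X2 piL piR : List ℕ)
    (hX1 : X1 = List.range' (n + 1) (n + 1)) (hX2 : X2 = List.range' (2 * n + 2) (n + 1))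
    (hL : piL = List.range' 1 n ++ X1 ++ X2)
    (hR : piR = X1 ++ (List.range' 1 n).reverse ++ X2)
    (π : List ℕ) (hπ : IsPermOf (3 * n + 2) π)
    (hnot : ¬ ∃ a b : List ℕ, a.Pairwise (· < ·) ∧ b.Pairwise (· > ·) ∧
      (a ++ b).Perm (List.range' 1 n) ∧ π = a ++ X1 ++ b ++ X2) :
    ulamDist π piL + ulamDist π piR ≥ n + 1 := by
  subst hX1 hX2 hL hR
  by_contra! hcost
  obtain ⟨s, t, hsπ, hsL, htπ, htR, hlen⟩ :=
    exists_sublists_of_ulamDist_add_le (Nat.le_of_lt_succ hcost)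
  have hπ_nodup : π.Nodup := hπ.nodup_iff.2 nodup_range'
  have hπ_len : π.length = 3 * n + 2 := by simpa using hπ.length_eq
  have hs_sorted : s.Pairwise (· < ·) :=
    (pairwise_lt_range').sublist (range'_append_range'_append_range' n ▸ hsL)
  obtain ⟨u, hus, hut, hu_mem, hu_len⟩ := hπ_nodup.exists_common_sublist hsπ htπ
  have hu : u = range' (n + 1) (n + 1) ++ range' (2 * n + 2) (n + 1) :=
    eq_range'_append_of_sublist (hs_sorted.sublist hus) (hut.trans htR)
      (by rw [length_range']; omega)
  obtain ⟨a, b, ha, hb, hab, rfl, rfl⟩ := exists_perm_of_sublist_append nodup_range' hsL htR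
    (fun x hxs hxt => by
      have := hu ▸ hu_mem x hxs hxt
      simp only [mem_append, mem_range'_1] at this ⊢
      omega)
    (by simp only [length_range']; omega)
  refine hnot ⟨a, b, (pairwise_lt_range').sublist ha,
    (pairwise_reverse.2 pairwise_lt_range').sublist hb, hab, ?_⟩
  have hπL : π ~ range' 1 n ++ range' (n + 1) (n + 1) ++ range' (2 * n + 2) (n + 1) := by
    rw [range'_append_range'_append_range']
    exact hπ
  have hcover := hπL.subset_append_of_perm hab
  simp only [range'_succ, append_assoc, cons_append] at hsπ htπ hcover ⊢
  exact eq_append_cons_of_sublist hπ_nodup hsπ htπ hcover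
end

section
/- Let e = {i, j} ⊆ [n] with i < j, and let π^1_e = j ∘ i ∘ X₁ ∘ X₂ ∘ (1⋯(i−1)(i+1)⋯(j−1)(j+1)⋯n) and π^2_e = X₁ ∘ i ∘ j ∘ X₂ ∘ (1⋯(i−1)(i+1)⋯(j−1)(j+1)⋯n), where X₁ = (n+1)⋯(2n+1) and X₂ = (2n+2)⋯(3n+2). Let π = π^{A,B} for a partition A ⊔ B = [n]. Then d_U(π^1_e, π) + d_U(π^2_e, π) = 2n − 2 if exactly one of i, j lies in A, and 2n − 1 otherwise. -/
/-!
The whole argument rests on one observation: a common subsequence of two duplicate-free words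
never contains a pair of letters that the two words order oppositely.

Write `π = a X₁ b X₂` and split `π¹_e = (j i X₁) X₂ rest`, `π²_e = (X₁ i j) X₂ rest`. Every letter
of `rest` lies in `a` or `b`, hence before `X₂` in `π`, so a common subsequence uses letters of
at most one of the blocks `X₂` (of length `n + 1`) and `rest` (of length `n - 2`). In the head
`j i X₁` of `π¹_e`, once a letter of `X₁` is used, `i` and `j` can only be used if they lie in `a`,
and not both, because `a` is increasing; symmetrically for the head `X₁ i j` of `π²_e`, with `b`
decreasing. This gives `LCS(π¹_e, π) = 2n + 2 + [i ∈ A ∨ j ∈ A]` and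
`LCS(π²_e, π) = 2n + 2 + [i ∈ B ∨ j ∈ B]`, and all three words have length `3n + 2`.
-/

namespace List

variable {α : Type*} {l s x y p q r : List α} {u v : α}

theorem pair_sublist_iff : [u, v] <+ l ↔ ∃ l₁ l₂, l = l₁ ++ l₂ ∧ u ∈ l₁ ∧ v ∈ l₂ := by
  rw [cons_sublist_iff]; simp only [singleton_sublist]

theorem pair_sublist_or_pair_sublist (hu : u ∈ l) (hv : v ∈ l) (huv : u ≠ v) :
    [u, v] <+ l ∨ [v, u] <+ l := by
  obtain ⟨p, q, rfl⟩ := append_of_mem hu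
  rcases mem_append.1 hv with hvp | hvq
  · exact .inr (pair_sublist_iff.2 ⟨p, u :: q, rfl, hvp, mem_cons_self⟩)
  · have hvq : v ∈ q := by simpa [Ne.symm huv] using hvq
    exact .inl (pair_sublist_iff.2 ⟨p ++ [u], q, by simp, by simp, hvq⟩)

theorem Nodup.not_pair_sublist_swap (hl : l.Nodup) (h : [u, v] <+ l) : ¬[v, u] <+ l := by
  induction l with
  | nil => simp
  | cons c l ih =>
    rw [nodup_cons] at hl
    intro h'
    rcases sublist_cons_iff.1 h with huv | ⟨_, ⟨rfl, rfl⟩, hv⟩ <;>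
      rcases sublist_cons_iff.1 h' with hvu | ⟨_, ⟨rfl, rfl⟩, hu⟩
    · exact ih hl.2 huv hvu
    · exact hl.1 (huv.subset (mem_cons_of_mem _ (mem_singleton_self _)))
    · exact hl.1 (hvu.subset (mem_cons_of_mem _ (mem_singleton_self _)))
    · exact hl.1 (singleton_sublist.1 hu)

theorem Pairwise.pair_sublist {R : α → α → Prop} (hl : l.Pairwise R) (hu : u ∈ l) (hv : v ∈ l)
    (huv : u ≠ v) (hvu : ¬R v u) : [u, v] <+ l :=
  (pair_sublist_or_pair_sublist hu hv huv).resolve_right fun h => hvu (hl.forall_sublist h)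

theorem Sublist.notMem_of_inversion (hsx : s <+ x) (hsy : s <+ y) (hx : x.Nodup) (hy : y.Nodup)
    (hx' : [u, v] <+ x) (hy' : [v, u] <+ y) (hu : u ∈ s) : v ∉ s := by
  intro hv
  have huv : u ≠ v := by simpa using hx.sublist hx'
  rcases pair_sublist_or_pair_sublist hu hv huv with h | h
  · exact hy.not_pair_sublist_swap hy' (h.trans hsy)
  · exact hx.not_pair_sublist_swap hx' (h.trans hsx)

theorem sublist_pair_cases (h : l <+ [u, v]) : l = [] ∨ l = [u] ∨ l = [v] ∨ l = [u, v] := by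
  simpa [sublists, or_assoc] using mem_sublists.2 h

theorem exists_common_sublist_of_inverted_tail (hx : (p ++ q ++ r).Nodup) (hy : y.Nodup)
    (hsx : s <+ p ++ q ++ r) (hsy : s <+ y) (hinv : ∀ c ∈ q, ∀ d ∈ r, [d, c] <+ y) :
    ∃ t, t <+ p ∧ t <+ y ∧ s.length ≤ t.length + max q.length r.length := by
  obtain ⟨tq, sr, rfl, htq, hsr⟩ := sublist_append_iff.1 hsx
  obtain ⟨t, sq, rfl, ht, hsq⟩ := sublist_append_iff.1 htq
  have hsq_or_hsr_nil : sq = [] ∨ sr = [] := by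
    by_contra! h
    obtain ⟨c, hc⟩ := exists_mem_of_ne_nil _ h.1
    obtain ⟨d, hd⟩ := exists_mem_of_ne_nil _ h.2
    exact hsx.notMem_of_inversion hsy hx hy
      (pair_sublist_iff.2 ⟨p ++ q, r, rfl, by simp [hsq.subset hc], hsr.subset hd⟩)
      (hinv c (hsq.subset hc) d (hsr.subset hd)) (by simp [hc]) (by simp [hd])
  refine ⟨t, ht, ((sublist_append_left _ _).trans (sublist_append_left _ _)).trans hsy, ?_⟩
  have := hsq.length_le
  have := hsr.length_le
  rcases hsq_or_hsr_nil with rfl | rfl <;> simp only [length_append, length_nil] <;> omega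

end List

theorem LCS_eq_of_forall_length_le {x y : List ℕ} {m : ℕ}
    (hs : ∃ s : List ℕ, s.Sublist x ∧ s.Sublist y ∧ s.length = m)
    (hle : ∀ s : List ℕ, s.Sublist x → s.Sublist y → s.length ≤ m) :
    LCS x y = m :=
  IsGreatest.csSup_eq ⟨hs, by rintro _ ⟨s, hsx, hsy, rfl⟩; exact hle s hsx hsy⟩

namespace EdgeGadget

open List

def X₁ (n : ℕ) : List ℕ := range' (n + 1) (n + 1)

def X₂ (n : ℕ) : List ℕ := range' (2 * n + 2) (n + 1)

def rest (n i j : ℕ) : List ℕ := (range' 1 n).filter fun z => !(z == i || z == j)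

def pie₁ (n i j : ℕ) : List ℕ := [j, i] ++ X₁ n ++ X₂ n ++ rest n i j

def pie₂ (n i j : ℕ) : List ℕ := X₁ n ++ [i, j] ++ X₂ n ++ rest n i j

def piAB (n : ℕ) (a b : List ℕ) : List ℕ := a ++ X₁ n ++ b ++ X₂ n

variable {n i j z : ℕ} {a b s : List ℕ}

@[simp] theorem mem_rest : z ∈ rest n i j ↔ (1 ≤ z ∧ z < n + 1) ∧ z ≠ i ∧ z ≠ j := by
  simp only [rest, mem_filter, mem_range'_1, Bool.not_or, Bool.and_eq_true, Bool.not_eq_true',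
    beq_eq_false_iff_ne]
  omega

@[simp] theorem length_X₁ : (X₁ n).length = n + 1 := length_range'

@[simp] theorem length_X₂ : (X₂ n).length = n + 1 := length_range'

theorem nodup_rest : (rest n i j).Nodup := (nodup_range' (step := 1)).filter _

theorem sublist_piAB_left : a <+ piAB n a b :=
  ((sublist_append_left _ _).trans (sublist_append_left _ _)).trans (sublist_append_left _ _)

theorem sublist_piAB_right : b <+ piAB n a b :=
  (sublist_append_right _ _).trans (sublist_append_left _ _)

theorem range'_eq_append_X₁_X₂ : range' 1 (3 * n + 2) = range' 1 n ++ X₁ n ++ X₂ n := by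
  rw [show 3 * n + 2 = n + (n + 1) + (n + 1) by omega, ← range'_append_1, ← range'_append_1, X₁, X₂]
  congr 2
  · rw [Nat.add_comm]
  · omega

theorem mem_right_iff_notMem_left (hab : a ++ b ~ range' 1 n) (hz : 1 ≤ z ∧ z < n + 1) :
    z ∈ b ↔ z ∉ a := by
  have hnd := hab.nodup_iff.2 nodup_range'
  have hmem : z ∈ a ++ b := hab.symm.subset (mem_range'_1.2 (by omega))
  rw [mem_append] at hmem
  exact ⟨fun hzb hza => disjoint_of_nodup_append hnd hza hzb, hmem.resolve_left⟩

theorem perm_piAB (hab : a ++ b ~ range' 1 n) : piAB n a b ~ range' 1 (3 * n + 2) := by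
  rw [range'_eq_append_X₁_X₂]
  refine Perm.trans ?_ ((hab.append_right _).append_right _)
  exact perm_iff_count.2 fun z => by simp only [piAB, count_append]; omega

theorem nodup_piAB (hab : a ++ b ~ range' 1 n) : (piAB n a b).Nodup :=
  (perm_piAB hab).nodup_iff.2 nodup_range'

theorem perm_rest (hi : 1 ≤ i) (hij : i < j) (hj : j ≤ n) : [i, j] ++ rest n i j ~ range' 1 n := by
  refine (perm_ext_iff_of_nodup (nodup_append.2 ⟨?_, nodup_rest, ?_⟩) nodup_range').2 fun z => ?_
  · simpa using hij.ne
  · intro x hx y hy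
    have := mem_rest.1 hy
    simp only [mem_cons, not_mem_nil, or_false] at hx
    omega
  · simp only [cons_append, nil_append, mem_cons, mem_rest, mem_range'_1]
    omega

theorem length_rest (hi : 1 ≤ i) (hij : i < j) (hj : j ≤ n) : (rest n i j).length = n - 2 := by
  have := (perm_rest hi hij hj).length_eq
  simp only [length_append, length_cons, length_nil, length_range'] at this
  omega

theorem perm_pie₁ (hi : 1 ≤ i) (hij : i < j) (hj : j ≤ n) : pie₁ n i j ~ range' 1 (3 * n + 2) := by
  rw [range'_eq_append_X₁_X₂]
  refine Perm.trans ?_ (((perm_rest hi hij hj).append_right _).append_right _)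
  exact perm_iff_count.2 fun z => by simp only [pie₁, count_append, count_cons, count_nil]; omega

theorem perm_pie₂ (hi : 1 ≤ i) (hij : i < j) (hj : j ≤ n) : pie₂ n i j ~ range' 1 (3 * n + 2) := by
  rw [range'_eq_append_X₁_X₂]
  refine Perm.trans ?_ (((perm_rest hi hij hj).append_right _).append_right _)
  exact perm_iff_count.2 fun z => by simp only [pie₂, count_append]; omega

theorem nodup_pie₁ (hi : 1 ≤ i) (hij : i < j) (hj : j ≤ n) : (pie₁ n i j).Nodup :=
  (perm_pie₁ hi hij hj).nodup_iff.2 nodup_range'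

theorem nodup_pie₂ (hi : 1 ≤ i) (hij : i < j) (hj : j ≤ n) : (pie₂ n i j).Nodup :=
  (perm_pie₂ hi hij hj).nodup_iff.2 nodup_range'

theorem pair_sublist_piAB_of_mem_X₂_of_mem_rest (hab : a ++ b ~ range' 1 n) :
    ∀ c ∈ X₂ n, ∀ d ∈ rest n i j, [d, c] <+ piAB n a b := by
  intro c hc d hd
  have hdab : d ∈ a ∨ d ∈ b :=
    or_iff_not_imp_left.2 (mem_right_iff_notMem_left hab (mem_rest.1 hd).1).2
  exact pair_sublist_iff.2 ⟨a ++ X₁ n ++ b, X₂ n, rfl, by simp only [mem_append]; tauto, hc⟩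

theorem length_le_of_sublist_prefix₁ (hi : 1 ≤ i) (hij : i < j) (hj : j ≤ n)
    (ha : a.Pairwise (· < ·)) (hab : a ++ b ~ range' 1 n)
    (hx : s <+ [j, i] ++ X₁ n) (hy : s <+ piAB n a b) :
    s.length ≤ n + 1 + if i ∈ a ∨ j ∈ a then 1 else 0 := by
  have hxnd : ([j, i] ++ X₁ n).Nodup :=
    (nodup_pie₁ hi hij hj).sublist ((sublist_append_left _ _).trans (sublist_append_left _ _))
  obtain ⟨u, v, rfl, hu, hv⟩ := sublist_append_iff.1 hx
  have hv_len : v.length ≤ n + 1 := by simpa using hv.length_le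
  rcases eq_or_ne v [] with rfl | hv_ne
  · have := hu.length_le
    simp only [length_append, length_nil, length_cons] at this ⊢
    omega
  obtain ⟨c, hc⟩ := exists_mem_of_ne_nil v hv_ne
  -- a letter of `b` comes after `c` in `π` but before it in the head
  have hua : ∀ z ∈ u, z ∈ a := by
    intro z hz
    have hz' : z = j ∨ z = i := by simpa using hu.subset hz
    by_contra hza
    have hzb := (mem_right_iff_notMem_left hab (by omega)).2 hza
    exact hx.notMem_of_inversion hy hxnd (nodup_piAB hab)
      (pair_sublist_iff.2 ⟨[j, i], X₁ n, rfl, hu.subset hz, hv.subset hc⟩)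
      (pair_sublist_iff.2
        ⟨a ++ X₁ n, b ++ X₂ n, by simp [piAB], by simp [hv.subset hc], by simp [hzb]⟩)
      (by simp [hz]) (by simp [hc])
  rcases sublist_pair_cases hu with rfl | rfl | rfl | rfl
  · simp only [nil_append]; omega
  · rw [if_pos (.inr (hua j (by simp)))]; simpa using hv_len
  · rw [if_pos (.inl (hua i (by simp)))]; simpa using hv_len
  · have hij_a : [i, j] <+ a :=
      ha.pair_sublist (hua i (by simp)) (hua j (by simp)) hij.ne (lt_asymm hij)
    exact absurd (by simp : i ∈ [j, i] ++ v) <| hx.notMem_of_inversion hy hxnd (nodup_piAB hab)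
      (sublist_append_left _ _) (hij_a.trans sublist_piAB_left) (by simp)

theorem length_le_of_sublist_prefix₂ (hi : 1 ≤ i) (hij : i < j) (hj : j ≤ n)
    (hb : b.Pairwise (· > ·)) (hab : a ++ b ~ range' 1 n)
    (hx : s <+ X₁ n ++ [i, j]) (hy : s <+ piAB n a b) :
    s.length ≤ n + 1 + if i ∈ b ∨ j ∈ b then 1 else 0 := by
  have hxnd : (X₁ n ++ [i, j]).Nodup :=
    (nodup_pie₂ hi hij hj).sublist ((sublist_append_left _ _).trans (sublist_append_left _ _))
  obtain ⟨v, u, rfl, hv, hu⟩ := sublist_append_iff.1 hx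
  have hv_len : v.length ≤ n + 1 := by simpa using hv.length_le
  rcases eq_or_ne v [] with rfl | hv_ne
  · have := hu.length_le
    simp only [length_append, length_nil, length_cons] at this ⊢
    omega
  obtain ⟨c, hc⟩ := exists_mem_of_ne_nil v hv_ne
  -- a letter of `a` comes before `c` in `π` but after it in the head
  have hub : ∀ z ∈ u, z ∈ b := by
    intro z hz
    have hz' : z = i ∨ z = j := by simpa using hu.subset hz
    by_contra hzb
    have hza : z ∈ a :=
      by_contra fun hza => hzb ((mem_right_iff_notMem_left hab (by omega)).2 hza)
    exact hx.notMem_of_inversion hy hxnd (nodup_piAB hab)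
      (pair_sublist_iff.2 ⟨X₁ n, [i, j], rfl, hv.subset hc, hu.subset hz⟩)
      (pair_sublist_iff.2 ⟨a, X₁ n ++ b ++ X₂ n, by simp [piAB], hza, by simp [hv.subset hc]⟩)
      (by simp [hc]) (by simp [hz])
  rcases sublist_pair_cases hu with rfl | rfl | rfl | rfl
  · simp only [append_nil]; omega
  · rw [if_pos (.inl (hub i (by simp)))]; simpa using hv_len
  · rw [if_pos (.inr (hub j (by simp)))]; simpa using hv_len
  · have hji_b : [j, i] <+ b :=
      hb.pair_sublist (hub j (by simp)) (hub i (by simp)) hij.ne' (lt_asymm hij)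
    exact absurd (by simp : j ∈ v ++ [i, j]) <| hx.notMem_of_inversion hy hxnd (nodup_piAB hab)
      (sublist_append_right _ _) (hji_b.trans sublist_piAB_right) (by simp)

theorem LCS_pie₁ (hi : 1 ≤ i) (hij : i < j) (hj : j ≤ n)
    (ha : a.Pairwise (· < ·)) (hab : a ++ b ~ range' 1 n) :
    LCS (pie₁ n i j) (piAB n a b) = 2 * n + 2 + if i ∈ a ∨ j ∈ a then 1 else 0 := by
  refine LCS_eq_of_forall_length_le ?_ fun s hx hy => ?_
  · split_ifs with h
    · obtain ⟨z, hz, hza⟩ : ∃ z ∈ [j, i], z ∈ a := by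
        rcases h with h | h
        exacts [⟨i, by simp, h⟩, ⟨j, by simp, h⟩]
      refine ⟨[z] ++ X₁ n ++ X₂ n, ?_, ?_, ?_⟩
      · exact (((singleton_sublist.2 hz).append_right _).append_right _).trans
          (sublist_append_left _ _)
      · exact (((singleton_sublist.2 hza).append_right _).trans
          (sublist_append_left _ _)).append_right _
      · simp only [length_append, length_singleton, length_X₁, length_X₂]; omega
    · refine ⟨X₁ n ++ X₂ n, ?_, ?_, ?_⟩
      · exact ((sublist_append_right _ _).append_right _).trans (sublist_append_left _ _)
      · exact ((sublist_append_right _ _).trans (sublist_append_left _ _)).append_right _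
      · simp only [length_append, length_X₁, length_X₂]; omega
  · obtain ⟨t, htx, hty, hlen⟩ := exists_common_sublist_of_inverted_tail
      (nodup_pie₁ hi hij hj) (nodup_piAB hab) hx hy (pair_sublist_piAB_of_mem_X₂_of_mem_rest hab)
    have := length_le_of_sublist_prefix₁ hi hij hj ha hab htx hty
    rw [length_X₂, length_rest hi hij hj] at hlen
    omega

theorem LCS_pie₂ (hi : 1 ≤ i) (hij : i < j) (hj : j ≤ n)
    (hb : b.Pairwise (· > ·)) (hab : a ++ b ~ range' 1 n) :
    LCS (pie₂ n i j) (piAB n a b) = 2 * n + 2 + if i ∈ b ∨ j ∈ b then 1 else 0 := by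
  refine LCS_eq_of_forall_length_le ?_ fun s hx hy => ?_
  · split_ifs with h
    · obtain ⟨z, hz, hzb⟩ : ∃ z ∈ [i, j], z ∈ b := by
        rcases h with h | h
        exacts [⟨i, by simp, h⟩, ⟨j, by simp, h⟩]
      refine ⟨X₁ n ++ [z] ++ X₂ n, ?_, ?_, ?_⟩
      · exact (((Sublist.refl _).append (singleton_sublist.2 hz)).append_right _).trans
          (sublist_append_left _ _)
      · exact ((sublist_append_right _ _).append (singleton_sublist.2 hzb)).append_right _
      · simp only [length_append, length_singleton, length_X₁, length_X₂]; omega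
    · refine ⟨X₁ n ++ X₂ n, ?_, ?_, ?_⟩
      · exact ((sublist_append_left _ _).append_right _).trans (sublist_append_left _ _)
      · exact ((sublist_append_right _ _).trans (sublist_append_left _ _)).append_right _
      · simp only [length_append, length_X₁, length_X₂]; omega
  · obtain ⟨t, htx, hty, hlen⟩ := exists_common_sublist_of_inverted_tail
      (nodup_pie₂ hi hij hj) (nodup_piAB hab) hx hy (pair_sublist_piAB_of_mem_X₂_of_mem_rest hab)
    have := length_le_of_sublist_prefix₂ hi hij hj hb hab htx hty
    rw [length_X₂, length_rest hi hij hj] at hlen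
    omega

theorem ulamDist_pie₁ (hi : 1 ≤ i) (hij : i < j) (hj : j ≤ n)
    (ha : a.Pairwise (· < ·)) (hab : a ++ b ~ range' 1 n) :
    ulamDist (pie₁ n i j) (piAB n a b) = n - if i ∈ a ∨ j ∈ a then 1 else 0 := by
  rw [ulamDist, (perm_pie₁ hi hij hj).length_eq, length_range', LCS_pie₁ hi hij hj ha hab]
  omega

theorem ulamDist_pie₂ (hi : 1 ≤ i) (hij : i < j) (hj : j ≤ n)
    (hb : b.Pairwise (· > ·)) (hab : a ++ b ~ range' 1 n) :
    ulamDist (pie₂ n i j) (piAB n a b) = n - if i ∈ b ∨ j ∈ b then 1 else 0 := by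
  rw [ulamDist, (perm_pie₂ hi hij hj).length_eq, length_range', LCS_pie₂ hi hij hj hb hab]
  omega

end EdgeGadget

theorem edge_gadget_cost (n i j : ℕ) (hi : 1 ≤ i) (hij : i < j) (hj : j ≤ n)
    (X1 X2 rest pie1 pie2 : List ℕ)
    (hX1 : X1 = List.range' (n + 1) (n + 1)) (hX2 : X2 = List.range' (2 * n + 2) (n + 1))
    (hrest : rest = (List.range' 1 n).filter fun z => !(z == i || z == j))
    (h1 : pie1 = [j, i] ++ X1 ++ X2 ++ rest)
    (h2 : pie2 = X1 ++ [i, j] ++ X2 ++ rest)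
    (a b : List ℕ) (ha : a.Pairwise (· < ·)) (hb : b.Pairwise (· > ·))
    (hab : (a ++ b).Perm (List.range' 1 n))
    (π : List ℕ) (hπ : π = a ++ X1 ++ b ++ X2) :
    (((i ∈ a ∧ j ∉ a) ∨ (i ∉ a ∧ j ∈ a)) →
        ulamDist pie1 π + ulamDist pie2 π = 2 * n - 2) ∧
    (¬((i ∈ a ∧ j ∉ a) ∨ (i ∉ a ∧ j ∈ a)) →
        ulamDist pie1 π + ulamDist pie2 π = 2 * n - 1) := by
  have d₁ : ulamDist pie1 π = n - if i ∈ a ∨ j ∈ a then 1 else 0 := by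
    subst_vars; exact EdgeGadget.ulamDist_pie₁ hi hij hj ha hab
  have d₂ : ulamDist pie2 π = n - if i ∈ b ∨ j ∈ b then 1 else 0 := by
    subst_vars; exact EdgeGadget.ulamDist_pie₂ hi hij hj hb hab
  have hib : i ∈ b ↔ i ∉ a := EdgeGadget.mem_right_iff_notMem_left hab (by omega)
  have hjb : j ∈ b ↔ j ∉ a := EdgeGadget.mem_right_iff_notMem_left hab (by omega)
  rw [d₁, d₂]
  by_cases hia : i ∈ a <;> by_cases hja : j ∈ a <;>
    simp only [hia, hja, hib, hjb, not_true_eq_false, not_false_eq_true, and_true, and_false,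
      true_and, and_self, or_self, or_true, or_false, ↓reduceIte, IsEmpty.forall_iff,
      forall_const, tsub_zero] <;> omega
end

section
/- Define η : S_L → S_{2L} by interleaving: for π ∈ S_L, η(π) := π[1] ∘ (L+1) ∘ π[2] ∘ (L+2) ∘ ⋯ ∘ π[L] ∘ (2L). Then for every π, π' ∈ S_L, d_U(η(π), η(π')) = d_H(π, π'), where d_H is the Hamming distance (number of positions at which the strings differ). -/
/-- Hamming distance between two equal-length strings. -/
def hamDist (x y : List ℕ) : ℕ := ((x.zip y).filter fun p => p.1 != p.2).length

/-- Interleave `π ∈ S_L` with the string `(L+1)(L+2)⋯(2L)`. -/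
def eta (L : ℕ) (π : List ℕ) : List ℕ :=
  ((π.zip (List.range' (L + 1) L)).map fun p => [p.1, p.2]).flatten

/-!
Write `η(π)` as `π[1] m₁ π[2] m₂ ⋯ π[L] m_L` with markers `mᵢ = L + i` that occur in neither
permutation. All markers together with the letters `π[i]` for which `π[i] = π'[i]` form a common
subsequence of length `L + (L - d_H)`. Conversely, peeling off the first blocks `π[1] m₁` and
`π'[1] m₁`, a common subsequence spends at most two letters on them, and at most one unless
`π[1] = π'[1]`, since otherwise it would have to match `m₁` inside the rest of the other string.
Hence `LCS = 2L - d_H` and `d_U = 2L - LCS = d_H`.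
-/

namespace List

variable {α : Type*}

lemma flatten_map_zip_eq_interleave {p r : List α} (h : p.length = r.length) :
    ((p.zip r).map fun q => [q.1, q.2]).flatten = p.interleave r := by
  induction p generalizing r with
  | nil => simp [length_eq_zero_iff.mp h.symm]
  | cons a p ih =>
    rcases r with _ | ⟨m, r⟩
    · simp at h
    · simp [ih (Nat.succ.inj h)]

lemma interleave_cons_cons (a m : α) (p r : List α) :
    (a :: p).interleave (m :: r) = a :: m :: p.interleave r := by
  simp

lemma mem_interleave {x : α} {p r : List α} : x ∈ p.interleave r ↔ x ∈ p ∨ x ∈ r := by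
  simp [interleave_perm_append.mem_iff]

variable [DecidableEq α]

def agreements (p p' : List α) : ℕ :=
  (p.zip p').countP fun q => q.1 = q.2

@[simp]
lemma agreements_cons_cons (a a' : α) (p p' : List α) :
    agreements (a :: p) (a' :: p') = agreements p p' + if a = a' then 1 else 0 := by
  simp [agreements, countP_cons]

lemma exists_common_sublist_of_cons_cons {a a' m : α} {X Y s : List α}
    (hX : m ∉ X) (hY : m ∉ Y) (ha : a ≠ m) (ha' : a' ≠ m)
    (hs : s <+ a :: m :: X) (hs' : s <+ a' :: m :: Y) :
    ∃ t, t <+ X ∧ t <+ Y ∧ s.length ≤ t.length + if a = a' then 2 else 1 := by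
  obtain ⟨s₁, s₂, rfl, hs₁, hs₂⟩ := (sublist_append_iff (r₁ := [a, m])).mp hs
  obtain ⟨t₁, t₂, heq, ht₁, ht₂⟩ := (sublist_append_iff (r₁ := [a', m])).mp hs'
  clear hs hs'
  wlog hle : t₁.length ≤ s₁.length generalizing a a' X Y s₁ s₂ t₁ t₂
  · obtain ⟨t, htY, htX, hlen⟩ :=
      this hY hX ha' ha t₁ t₂ ht₁ ht₂ s₁ s₂ heq.symm hs₁ hs₂ (by omega)
    simp only [@eq_comm _ a'] at hlen
    exact ⟨t, htX, htY, heq ▸ hlen⟩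
  obtain ⟨u, rfl, rfl⟩ : ∃ u, s₁ = t₁ ++ u ∧ t₂ = u ++ s₂ := by
    rcases append_eq_append_iff.mp heq with ⟨u, rfl, rfl⟩ | h
    · obtain rfl : u = [] := by simpa using hle
      exact ⟨[], by simp, by simp⟩
    · exact h
  refine ⟨s₂, hs₂, (sublist_append_right u s₂).trans ht₂, ?_⟩
  have hhead : (t₁ ++ u).length ≤ if a = a' then 2 else 1 := by
    split_ifs with haa
    · simpa using hs₁.length_le
    by_contra! h2
    have hfull : t₁ ++ u = [a, m] :=
      hs₁.eq_of_length_le (by simp only [length_append] at h2; simp; omega)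
    rcases t₁ with _ | ⟨b, t₁⟩
    · simp only [nil_append] at hfull
      subst hfull
      exact hY (ht₂.subset (by simp))
    · obtain rfl : b = a := (cons_eq_cons.mp hfull).1
      rcases mem_pair.mp (ht₁.subset mem_cons_self) with h | h
      exacts [haa h, ha h]
  simp only [length_append] at hhead ⊢
  omega

lemma length_le_of_common_sublist_interleave {p p' r s : List α}
    (hp : p.length = r.length) (hp' : p'.length = r.length)
    (hpr : p.Disjoint r) (hpr' : p'.Disjoint r) (hr : r.Nodup)
    (hs : s <+ p.interleave r) (hs' : s <+ p'.interleave r) :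
    s.length ≤ r.length + agreements p p' := by
  induction r generalizing p p' s with
  | nil => simp_all
  | cons m r ih =>
    rcases p with _ | ⟨a, p⟩
    · simp at hp
    rcases p' with _ | ⟨a', p'⟩
    · simp at hp'
    rw [interleave_cons_cons] at hs hs'
    simp only [disjoint_cons_left, disjoint_cons_right, mem_cons, not_or] at hpr hpr'
    obtain ⟨hmr, hr⟩ := nodup_cons.mp hr
    have hm : ∀ {q : List α}, q.Disjoint r → m ∉ q → m ∉ q.interleave r :=
      fun hq hmq hmi => (mem_interleave.mp hmi).elim hmq hmr
    obtain ⟨t, ht, ht', hlen⟩ := exists_common_sublist_of_cons_cons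
      (hm hpr.2.2 hpr.1.2) (hm hpr'.2.2 hpr'.1.2)
      (Ne.symm hpr.1.1) (Ne.symm hpr'.1.1) hs hs'
    have := ih (Nat.succ.inj hp) (Nat.succ.inj hp') hpr.2.2 hpr'.2.2 hr ht ht'
    simp only [length_cons, agreements_cons_cons]
    split_ifs at hlen ⊢ <;> omega

lemma exists_common_sublist_interleave {p p' r : List α}
    (hp : p.length = r.length) (hp' : p'.length = r.length) :
    ∃ s, s <+ p.interleave r ∧ s <+ p'.interleave r ∧ s.length = r.length + agreements p p' := by
  induction r generalizing p p' with
  | nil => exact ⟨[], by simp_all [agreements]⟩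
  | cons m r ih =>
    rcases p with _ | ⟨a, p⟩
    · simp at hp
    rcases p' with _ | ⟨a', p'⟩
    · simp at hp'
    obtain ⟨s, hs, hs', hlen⟩ := ih (Nat.succ.inj hp) (Nat.succ.inj hp')
    simp only [interleave_cons_cons]
    by_cases haa : a = a'
    · subst haa
      exact ⟨a :: m :: s, (hs.cons_cons _).cons_cons _, (hs'.cons_cons _).cons_cons _,
        by simp [hlen]; omega⟩
    · exact ⟨m :: s, (hs.cons_cons _).cons _, (hs'.cons_cons _).cons _,
        by simp [hlen, haa]; omega⟩

end List

open List

lemma LCS_eq_of_isGreatest {x y : List ℕ} {k : ℕ}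
    (hmem : ∃ s, s <+ x ∧ s <+ y ∧ s.length = k)
    (hle : ∀ s, s <+ x → s <+ y → s.length ≤ k) :
    LCS x y = k :=
  IsGreatest.csSup_eq ⟨hmem, by rintro _ ⟨s, hx, hy, rfl⟩; exact hle s hx hy⟩

lemma LCS_interleave {p p' r : List ℕ} (hp : p.length = r.length) (hp' : p'.length = r.length)
    (hpr : p.Disjoint r) (hpr' : p'.Disjoint r) (hr : r.Nodup) :
    LCS (p.interleave r) (p'.interleave r) = r.length + agreements p p' :=
  LCS_eq_of_isGreatest (exists_common_sublist_interleave hp hp')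
    fun _ hs hs' => length_le_of_common_sublist_interleave hp hp' hpr hpr' hr hs hs'

lemma hamDist_add_agreements (p p' : List ℕ) :
    hamDist p p' + agreements p p' = (p.zip p').length := by
  rw [length_eq_countP_add_countP (fun q : ℕ × ℕ => q.1 = q.2), hamDist, agreements,
    ← countP_eq_length_filter, add_comm]
  congr 1
  exact countP_congr fun q _ => by simp

lemma IsPermOf.length_eq {n : ℕ} {π : List ℕ} (h : IsPermOf n π) : π.length = n := by
  simpa using List.Perm.length_eq h

lemma IsPermOf.disjoint_range' {n : ℕ} {π : List ℕ} (h : IsPermOf n π) :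
    π.Disjoint (range' (n + 1) n) := fun x hx hx' => by
  have := mem_range'_1.mp (h.subset hx)
  have := mem_range'_1.mp hx'
  omega

theorem interleaving_embedding (L : ℕ) (π π' : List ℕ)
    (hπ : IsPermOf L π) (hπ' : IsPermOf L π') :
    ulamDist (eta L π) (eta L π') = hamDist π π' := by
  have hlen : π.length = (range' (L + 1) L).length := by simp [hπ.length_eq]
  have hlen' : π'.length = (range' (L + 1) L).length := by simp [hπ'.length_eq]
  have hLCS := LCS_interleave hlen hlen' hπ.disjoint_range' hπ'.disjoint_range' nodup_range'
  have hham := hamDist_add_agreements π π'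
  rw [length_zip, hπ.length_eq, hπ'.length_eq, min_self] at hham
  rw [ulamDist, eta, eta, flatten_map_zip_eq_interleave hlen, flatten_map_zip_eq_interleave hlen',
    hLCS, length_interleave, hlen, length_range']
  omega
end

section
/- Let Σ₁, …, Σ_n ⊆ Σ be alphabets of a common size s. Then there exists an alphabet Φ disjoint from Σ with |Φ| = O(n log n), and strings b₁, …, b_n such that each b_i is a permutation of Σ_i ⊔ Φ (a string of length s + |Φ| in which each symbol of Σ_i ⊔ Φ appears exactly once), and for all distinct i, j, the Hamming distance between b_i and b_j is maximal: d_H(b_i, b_j) = s + |Φ|. -/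
open Finset Function

lemma hamDist_ofFn {m : ℕ} (f g : Fin m → ℕ) (h : ∀ p, f p ≠ g p) :
    hamDist (List.ofFn f) (List.ofFn g) = m := by
  unfold hamDist
  rw [List.filter_eq_self.mpr, List.length_zip, List.length_ofFn, List.length_ofFn, min_self]
  intro a ha
  obtain ⟨i, hi, rfl⟩ := List.mem_iff_getElem.mp ha
  simpa only [List.getElem_zip, List.getElem_ofFn, bne_iff_ne] using h _

theorem exists_injective_mem_of_le_card_of_card_filter_le {ι α : Type*} [Fintype ι]
    [Fintype α] [DecidableEq α] (r : ι → Finset α) (k : ℕ)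
    (hcard : Fintype.card ι ≤ Fintype.card α) (hdeg : ∀ i, k ≤ #(r i))
    (hmiss : ∀ a, #{i | a ∉ r i} ≤ k) :
    ∃ f : ι → α, Injective f ∧ ∀ i, f i ∈ r i := by
  rw [← all_card_le_biUnion_card_iff_exists_injective]
  intro S
  -- A small `S` is matched inside one `r i`; a large one meets every `{i | a ∈ r i}`.
  by_cases hS : #S ≤ k
  · rcases S.eq_empty_or_nonempty with rfl | ⟨i, hi⟩
    · simp
    · exact hS.trans ((hdeg i).trans (card_le_card (subset_biUnion_of_mem r hi)))
  · have hcover : S.biUnion r = univ := eq_univ_of_forall fun a => by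
      by_contra ha
      have hsub : S ⊆ ({i | a ∉ r i} : Finset ι) := fun i hi => by
        simp only [mem_filter, mem_univ, true_and]
        exact fun hai => ha (mem_biUnion.mpr ⟨i, hi, hai⟩)
      exact hS ((card_le_card hsub).trans (hmiss a))
    rw [hcover, card_univ]
    exact (card_le_univ S).trans hcard

theorem exists_injective_mem_ne_of_two_mul_le {α : Type*} [DecidableEq α] {m t : ℕ}
    (A : Finset α) (hA : #A = m) (prev : Fin t → Fin m → α) (hprev : ∀ j, Injective (prev j))
    (htm : 2 * t ≤ m) :
    ∃ g : Fin m → α, Injective g ∧ (∀ p, g p ∈ A) ∧ ∀ j p, g p ≠ prev j p := by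
  set allowed : Fin m → Finset A := fun p => {x | ∀ j, prev j p ≠ x}
  have hdeg : ∀ p, m - t ≤ #(allowed p) := by
    intro p
    have hblocked : #{x : A | ¬ ∀ j, prev j p ≠ x} ≤ t := calc
      _ ≤ #(univ.image fun j => prev j p) := by
        refine card_le_card_of_injOn Subtype.val (fun x hx => ?_) Subtype.val_injective.injOn
        simp only [coe_filter, Set.mem_ofPred_eq, mem_univ, true_and, not_forall, not_not] at hx
        simpa [eq_comm] using hx
      _ ≤ t := card_image_le.trans (by simp)
    have := card_filter_add_card_filter_not (s := (univ : Finset A)) (fun x => ∀ j, prev j p ≠ x)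
    simp only [card_univ, Fintype.card_coe, hA] at this
    simp only [allowed]
    omega
  have hmiss : ∀ x, #{p | x ∉ allowed p} ≤ m - t := by
    intro x
    calc _ ≤ #(univ.biUnion fun j => ({p | prev j p = x} : Finset (Fin m))) := by
          refine card_le_card fun p hp => ?_
          simp only [allowed, mem_filter, mem_univ, true_and, not_forall, not_not] at hp
          simpa using hp
      _ ≤ ∑ _j : Fin t, 1 := card_biUnion_le.trans (sum_le_sum fun j _ =>
          card_le_one.mpr fun a ha b hb => hprev j (by simp_all))
      _ ≤ m - t := by rw [sum_const, card_univ, Fintype.card_fin, smul_eq_mul, mul_one]; omega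
  obtain ⟨f, hf, hfr⟩ := exists_injective_mem_of_le_card_of_card_filter_le allowed (m - t)
    (by simp [hA]) hdeg hmiss
  refine ⟨fun p => f p, Subtype.val_injective.comp hf, fun p => (f p).2, fun j p => ?_⟩
  have := hfr p
  simp only [allowed, mem_filter, mem_univ, true_and] at this
  exact (this j).symm

theorem exists_latin_rectangle {α : Type*} [DecidableEq α] {n m : ℕ} (A : Fin n → Finset α)
    (hA : ∀ i, #(A i) = m) (hnm : 2 * n ≤ m) :
    ∃ M : Fin n → Fin m → α, (∀ i, Injective (M i) ∧ ∀ p, M i p ∈ A i) ∧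
      ∀ i j, i ≠ j → ∀ p, M i p ≠ M j p := by
  induction n with
  | zero => exact ⟨finZeroElim, finZeroElim, finZeroElim⟩
  | succ n ih =>
    obtain ⟨M, hM, hMne⟩ := ih (Fin.tail A) (fun i => hA _) (by omega)
    obtain ⟨g, hg, hgA, hgne⟩ :=
      exists_injective_mem_ne_of_two_mul_le (A 0) (hA 0) M (fun j => (hM j).1) (by omega)
    refine ⟨Fin.cons g M, fun i => ?_, fun i j hij p => ?_⟩
    · cases i using Fin.cases with
      | zero => exact ⟨hg, hgA⟩
      | succ i => exact hM i
    · cases i using Fin.cases <;> cases j using Fin.cases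
      · exact absurd rfl hij
      · exact hgne _ p
      · exact (hgne _ p).symm
      · exact hMne _ _ (fun h => hij (congrArg Fin.succ h)) p

theorem maximal_hamming_codes :
    ∃ C : ℕ, ∀ (n s : ℕ) (Sig : Finset ℕ) (Sigs : Fin n → Finset ℕ),
      (∀ i, Sigs i ⊆ Sig) → (∀ i, (Sigs i).card = s) →
      ∃ (Phi : Finset ℕ) (b : Fin n → List ℕ),
        Disjoint Phi Sig ∧ Phi.card ≤ C * n * (Nat.log 2 n + 1) ∧
        (∀ i, (b i).Nodup ∧ (b i).toFinset = Sigs i ∪ Phi) ∧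
        (∀ i j, i ≠ j → hamDist (b i) (b j) = s + Phi.card) := by
  refine ⟨2, fun n s Sig Sigs hsub hcard => ?_⟩
  set Phi := Ico (Sig.sup id + 1) (Sig.sup id + 1 + 2 * n)
  have hPhi : #Phi = 2 * n := by simp [Phi]
  have hdisj : Disjoint Phi Sig := disjoint_left.mpr fun x hx hxSig => by
    have := le_sup (f := id) hxSig
    simp only [Phi, mem_Ico, id] at hx this
    omega
  have hrow : ∀ i, #(Sigs i ∪ Phi) = s + 2 * n := fun i => by
    rw [card_union_of_disjoint (hdisj.mono_right (hsub i)).symm, hcard, hPhi]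
  obtain ⟨M, hM, hMne⟩ := exists_latin_rectangle (fun i => Sigs i ∪ Phi) hrow (by omega)
  refine ⟨Phi, fun i => List.ofFn (M i), hdisj, ?_, fun i => ⟨List.nodup_ofFn.mpr (hM i).1, ?_⟩,
    fun i j hij => by rw [hPhi]; exact hamDist_ofFn _ _ (hMne i j hij)⟩
  · rw [hPhi]
    exact Nat.le_mul_of_pos_right _ (Nat.succ_pos _)
  · refine eq_of_subset_of_card_le (fun x hx => ?_) ?_
    · obtain ⟨p, rfl⟩ := List.mem_ofFn.mp (List.mem_toFinset.mp hx)
      exact (hM i).2 p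
    · rw [hrow, List.toFinset_card_of_nodup (List.nodup_ofFn.mpr (hM i).1), List.length_ofFn]
end
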